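/- If a simple graph G satisfies property P, then the complement graph of G contains no induced subgraph isomorphic to an odd cycle of length at least 5. -/

import Mathlib

/-!
If `a - b - c - d` is an induced path in `Gᶜ`, then `(a, c)`, `(d, b)` and `(d, a)` are edges of
`G`, the first two disjoint, so property `P` makes `b` adjacent in `G` to `a` or `c`, one of its
two neighbours in `Gᶜ`. Four consecutive vertices of a cycle of length at least `5` induce such a
path.
-/

/-- Property `P` of the paper: for any two disjoint edges `(v1,w1)` and
`(v2,w2)` of `G`, if `(v2,v1)` is an edge then `(w2,v1)` or `(w2,w1)` is an
edge of `G`. -/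
def SimpleGraph.PropertyP {V : Type*} (G : SimpleGraph V) : Prop :=
  ∀ ⦃v1 w1 v2 w2 : V⦄, G.Adj v1 w1 → G.Adj v2 w2 →
    v1 ≠ v2 → v1 ≠ w2 → w1 ≠ v2 → w1 ≠ w2 →
    G.Adj v2 v1 → (G.Adj w2 v1 ∨ G.Adj w2 w1)

namespace SimpleGraph

def pathGraphEmbeddingCycleGraph {k n : ℕ} (h : k < n) : pathGraph k ↪g cycleGraph n where
  toEmbedding := Fin.castLEEmb h.le
  map_rel_iff' {u v} := by
    have hu := u.2
    have hv := v.2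
    rw [Fin.coe_castLEEmb, cycleGraph_adj', pathGraph_adj]
    rcases lt_trichotomy u v with huv | rfl | hvu
    · rw [Fin.coe_sub_iff_lt.mpr (by simpa using huv),
        Fin.coe_sub_iff_le.mpr (by simpa using huv.le)]
      simp only [Fin.val_castLE]
      omega
    · rw [Fin.coe_sub_iff_le.mpr le_rfl]
      omega
    · rw [Fin.coe_sub_iff_le.mpr (by simpa using hvu.le),
        Fin.coe_sub_iff_lt.mpr (by simpa using hvu)]
      simp only [Fin.val_castLE]
      omega

theorem PropertyP.isEmpty_pathGraph_four_embedding_compl {V : Type*} {G : SimpleGraph V}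
    (hP : G.PropertyP) : IsEmpty (pathGraph 4 ↪g Gᶜ) := by
  refine ⟨fun e => ?_⟩
  have adj_of_not_adj : ∀ i j, i ≠ j → ¬ (pathGraph 4).Adj i j → G.Adj (e i) (e j) :=
    fun i j hij hpath => by
      simpa [e.injective.ne hij] using mt e.map_adj_iff.mp hpath
  have not_adj_of_adj : ∀ i j, (pathGraph 4).Adj i j → ¬ G.Adj (e i) (e j) :=
    fun i j hpath => (e.map_adj_iff.mpr hpath).2
  have hac : G.Adj (e 0) (e 2) := adj_of_not_adj 0 2 (by decide) (by simp [pathGraph_adj])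
  have hdb : G.Adj (e 3) (e 1) := adj_of_not_adj 3 1 (by decide) (by simp [pathGraph_adj])
  have hda : G.Adj (e 3) (e 0) := adj_of_not_adj 3 0 (by decide) (by simp [pathGraph_adj])
  rcases hP hac hdb (e.injective.ne (by decide)) (e.injective.ne (by decide))
      (e.injective.ne (by decide)) (e.injective.ne (by decide)) hda with hba | hbc
  · exact not_adj_of_adj 1 0 (by simp [pathGraph_adj]) hba
  · exact not_adj_of_adj 1 2 (by simp [pathGraph_adj]) hbc

end SimpleGraph

theorem compl_no_induced_long_odd_cycle_of_propertyP_general {V : Type*} (G : SimpleGraph V)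
    (hP : G.PropertyP) (n : ℕ) (hn : 5 ≤ n) :
    IsEmpty (SimpleGraph.cycleGraph n ↪g Gᶜ) :=
  ⟨fun f => hP.isEmpty_pathGraph_four_embedding_compl.false
    (f.comp (SimpleGraph.pathGraphEmbeddingCycleGraph hn))⟩

/-- If a simple graph `G` satisfies property `P`, then the complement of `G`
has no induced subgraph isomorphic to an odd cycle of length at least `5`. -/
theorem compl_no_induced_long_odd_cycle_of_propertyP {V : Type*} (G : SimpleGraph V)
    (hP : G.PropertyP) (n : ℕ) (hn : 5 ≤ n) (hodd : Odd n) :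
    IsEmpty (SimpleGraph.cycleGraph n ↪g Gᶜ) :=
  compl_no_induced_long_odd_cycle_of_propertyP_general G hP n hn
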